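/- arXiv:2009.10154 — 2 statements merged into one kernel-verified Lean document; each statement's English description precedes it below -/
import Mathlib

section
/- The kernel of Π_E (equivalently, the fixed-point set of the complementary projection Π_F := id − Π_E) equals the sum of subspaces range(d₀⁻¹) + range(d ∘ d₀⁻¹): { α ∈ V : Π_E α = 0 } = Im d₀⁻¹ + Im(d ∘ d₀⁻¹). -/
/-! The operator `Q` is a homotopy: `Π_E = id - (Q d + d Q)`. Since `P` inverts `1 + D` on both
sides, `(1 + D) Q = d₀⁻¹` shows `Q = d₀⁻¹ (id - (d - d₀) Q)`, so `Q` takes values in `Im d₀⁻¹`;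
then `α = Q d α + d Q α` for `α ∈ ker Π_E` lands in `Im d₀⁻¹ + Im (d d₀⁻¹)`. Conversely, the
partial-inverse axioms give `d₀⁻¹ d₀⁻¹ = 0` and `d₀⁻¹ d₀ d₀⁻¹ = d₀⁻¹`, whence
`Q d d₀⁻¹ = P (1 + D) d₀⁻¹ = d₀⁻¹` and `Q d₀⁻¹ = 0`; together with `d d = 0` these make `Π_E`
vanish on `Im d₀⁻¹` and on `Im (d d₀⁻¹)`. -/

open Finset LinearMap

theorem sum_neg_one_pow_smul_pow {R A : Type*} [CommRing R] [Ring A] [Algebra R A]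
    (x : A) (n : ℕ) : ∑ k ∈ range n, (-1 : R) ^ k • x ^ k = ∑ k ∈ range n, (-x) ^ k := by
  simp_rw [← smul_pow, neg_one_smul]

section Ring

variable {A : Type*} [Ring A]

theorem one_add_mul_geom_sum_neg_of_pow_eq_zero {x : A} {n : ℕ} (hx : x ^ n = 0) :
    (1 + x) * ∑ k ∈ range n, (-x) ^ k = 1 := by
  have h := mul_neg_geom_sum (-x) n
  rwa [sub_neg_eq_add, neg_pow, hx, mul_zero, sub_zero] at h

theorem geom_sum_neg_mul_one_add_of_pow_eq_zero {x : A} {n : ℕ} (hx : x ^ n = 0) :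
    (∑ k ∈ range n, (-x) ^ k) * (1 + x) = 1 := by
  have h := geom_sum_mul_neg (-x) n
  rwa [sub_neg_eq_add, neg_pow, hx, mul_zero, sub_zero] at h

theorem mul_eq_mul_one_sub_of_one_add_mul_mul_eq_one {a b p : A} (h : (1 + a * b) * p = 1) :
    p * a = a * (1 - b * p * a) :=
  calc p * a = (1 + a * b) * p * a - a * (b * p * a) := by noncomm_ring
    _ = a * (1 - b * p * a) := by rw [h, one_mul, mul_sub, mul_one]

/-! In the rest of this section `e` plays the role of `d₀`, `a` that of `d₀⁻¹`, and `p * a`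
that of `Q`. -/

variable {e a d p : A}

theorem mul_mul_mul_eq_of_mul_one_add_mul_eq_one (hea : a * e * a = a)
    (hp : p * (1 + a * (d - e)) = 1) : p * a * d * a = a :=
  calc p * a * d * a = p * (a * (d - e) * a + a * e * a) := by noncomm_ring
    _ = p * (1 + a * (d - e)) * a := by rw [hea]; noncomm_ring
    _ = a := by rw [hp, one_mul]

theorem one_sub_sub_mul_eq_zero (ha : a * a = 0) (hea : a * e * a = a)
    (hp : p * (1 + a * (d - e)) = 1) : (1 - p * a * d - d * (p * a)) * a = 0 := by
  have hQa : p * a * a = 0 := by rw [mul_assoc, ha, mul_zero]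
  calc (1 - p * a * d - d * (p * a)) * a = a - p * a * d * a - d * (p * a * a) := by noncomm_ring
    _ = 0 := by rw [mul_mul_mul_eq_of_mul_one_add_mul_eq_one hea hp, hQa, mul_zero]; abel

theorem one_sub_sub_mul_mul_eq_zero (hd : d * d = 0) (hea : a * e * a = a)
    (hp : p * (1 + a * (d - e)) = 1) : (1 - p * a * d - d * (p * a)) * (d * a) = 0 := by
  calc (1 - p * a * d - d * (p * a)) * (d * a)
        = d * a - p * a * (d * d) * a - d * (p * a * d * a) := by noncomm_ring
    _ = 0 := by rw [mul_mul_mul_eq_of_mul_one_add_mul_eq_one hea hp, hd]; noncomm_ring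

end Ring

theorem ker_id_sub_comp_sub_comp_le {R M : Type*} [Ring R] [AddCommGroup M] [Module R M]
    (Q d : M →ₗ[R] M) : ker (LinearMap.id - Q ∘ₗ d - d ∘ₗ Q) ≤ range Q ⊔ range (d ∘ₗ Q) := by
  intro α hα
  have hα' : α = Q (d α) + d (Q α) := by
    simpa [sub_sub, sub_eq_zero] using hα
  rw [hα']
  exact Submodule.add_mem_sup (mem_range_self Q _) (mem_range_self (d ∘ₗ Q) α)

section PartialInverse

variable {𝕜 E : Type*} [RCLike 𝕜] [NormedAddCommGroup E] [InnerProductSpace 𝕜 E]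
  {d₀ dinv : E →ₗ[𝕜] E}

theorem comp_self_eq_zero_of_orthogonal_range_le_ker (hd₀ : d₀ ∘ₗ d₀ = 0)
    (h₁ : (range d₀)ᗮ ≤ ker dinv) (h₂ : range dinv ≤ (ker d₀)ᗮ) : dinv ∘ₗ dinv = 0 :=
  range_le_ker_iff.1 <|
    h₂.trans <| (Submodule.orthogonal_le (range_le_ker_iff.2 hd₀)).trans h₁

theorem comp_comp_eq_self_of_apply_eq_orthogonalProjection [(range d₀).HasOrthogonalProjection]
    (h₁ : (range d₀)ᗮ ≤ ker dinv)
    (h₃ : ∀ v, d₀ (dinv v) = ((range d₀).orthogonalProjectionOnto v : E)) :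
    dinv ∘ₗ d₀ ∘ₗ dinv = dinv := by
  ext v
  have hv : dinv (v - (range d₀).starProjection v) = 0 :=
    h₁ (Submodule.sub_starProjection_mem_orthogonal v)
  rw [map_sub, sub_eq_zero] at hv
  rw [comp_apply, comp_apply, h₃, hv, Submodule.starProjection_apply]

end PartialInverse

/-- The kernel of `Π_E` (the fixed-point set of `Π_F := id − Π_E`)
equals `Im d₀⁻¹ + Im (d ∘ d₀⁻¹)`. -/
theorem ker_PiE_eq_range_sup_range
    {V : Type*} [NormedAddCommGroup V] [InnerProductSpace ℝ V] [FiniteDimensional ℝ V]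
    (d₀ dinv : V →ₗ[ℝ] V) (hd₀ : d₀ ∘ₗ d₀ = 0)
    (hpinv₁ : (LinearMap.range d₀)ᗮ ≤ LinearMap.ker dinv)
    (hpinv₂ : LinearMap.range dinv ≤ (LinearMap.ker d₀)ᗮ)
    (hpinv₃ : ∀ v : V, d₀ (dinv v) = (Submodule.orthogonalProjection (LinearMap.range d₀) v : V))
    (d : V →ₗ[ℝ] V) (hd : d ∘ₗ d = 0)
    (D : V →ₗ[ℝ] V) (hD : D = dinv ∘ₗ (d - d₀))
    (N : ℕ) (hDnil : D ^ (N + 1) = 0)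
    (P : V →ₗ[ℝ] V) (hP : P = ∑ k ∈ Finset.range (N + 1), ((-1 : ℝ)) ^ k • D ^ k)
    (Q : V →ₗ[ℝ] V) (hQ : Q = P ∘ₗ dinv)
    (PiE : V →ₗ[ℝ] V) (hPiE : PiE = LinearMap.id - Q ∘ₗ d - d ∘ₗ Q) :
    LinearMap.ker PiE = LinearMap.range dinv ⊔ LinearMap.range (d ∘ₗ dinv) := by
  subst hD hQ hPiE
  have hP_geom := hP.trans (sum_neg_one_pow_smul_pow _ _)
  have hPleft : (1 + dinv * (d - d₀)) * P = 1 := by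
    rw [hP_geom]; exact one_add_mul_geom_sum_neg_of_pow_eq_zero hDnil
  have hPright : P * (1 + dinv * (d - d₀)) = 1 := by
    rw [hP_geom]; exact geom_sum_neg_mul_one_add_of_pow_eq_zero hDnil
  have hdd := comp_comp_eq_self_of_apply_eq_orthogonalProjection hpinv₁ hpinv₃
  have hQ : range (P ∘ₗ dinv) ≤ range dinv := by
    rw [← Module.End.mul_eq_comp, mul_eq_mul_one_sub_of_one_add_mul_mul_eq_one hPleft]
    exact range_comp_le_range _ _
  refine le_antisymm ?_ (sup_le ?_ ?_)
  · refine (ker_id_sub_comp_sub_comp_le _ d).trans (sup_le_sup hQ ?_)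
    rw [range_comp (P ∘ₗ dinv) d, range_comp dinv d]
    exact Submodule.map_mono hQ
  · exact range_le_ker_iff.2 <| one_sub_sub_mul_eq_zero
      (comp_self_eq_zero_of_orthogonal_range_le_ker hd₀ hpinv₁ hpinv₂) hdd hPright
  · exact range_le_ker_iff.2 <| one_sub_sub_mul_mul_eq_zero hd hdd hPright
end

section
/- Define the Rumin differential d_c := Π_{E₀} ∘ d ∘ Π_E. Then d_c ∘ d_c = 0 and Π_E ∘ d_c = d ∘ Π_E. (Together with the fact that Π_{E₀}|_E and Π_E|_{E₀} are mutually inverse bijections, this says the complex (E₀, d_c) is conjugate to the subcomplex (E, d) of (V, d).) -/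
/-! Everything happens in the ring `Module.End ℝ V`. The partial-inverse axioms give
`dinv * dinv = 0` and `dinv * d₀ * dinv = dinv`, and `P` is the two-sided inverse of
`1 + D` (a finite Neumann series, `D` being nilpotent). With these, `Q = P * dinv` satisfies
`Q * Q = 0` and `Q * d * Q = Q`, which makes `Π_E = 1 - Q d - d Q` an idempotent commuting with
`d`, and `dinv * Π_E = Π_E * dinv = 0`. Hence the correction terms of `Π_{E₀}` die between
`Π_E` and `d Π_E`, so `Π_E d_c = Π_E d Π_E = d Π_E`, and then
`d_c d_c = Π_{E₀} d (Π_E d_c) = Π_{E₀} d d Π_E = 0`. -/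

theorem geom_sum_neg_mul_one_add {R : Type*} [Ring R] {x : R} {n : ℕ} (hx : x ^ n = 0) :
    (∑ k ∈ Finset.range n, (-x) ^ k) * (1 + x) = 1 := by
  simpa [neg_pow x, hx] using geom_sum_mul_neg (-x) n

theorem one_add_mul_geom_sum_neg {R : Type*} [Ring R] {x : R} {n : ℕ} (hx : x ^ n = 0) :
    (1 + x) * ∑ k ∈ Finset.range n, (-x) ^ k = 1 := by
  simpa [neg_pow x, hx] using mul_neg_geom_sum (-x) n

namespace Rumin

section PartialInverse

open LinearMap

variable {V : Type*} [NormedAddCommGroup V] [InnerProductSpace ℝ V] {d₀ dinv : V →ₗ[ℝ] V}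

theorem dinv_mul_self (hd₀ : d₀ ∘ₗ d₀ = 0) (hker : (range d₀)ᗮ ≤ ker dinv)
    (hrange : range dinv ≤ (ker d₀)ᗮ) : dinv * dinv = 0 := by
  ext v
  exact hker <| Submodule.orthogonal_le (range_le_ker_iff.mpr hd₀) <| hrange <| mem_range_self _ v

theorem dinv_mul_mul_dinv [(range d₀).HasOrthogonalProjection] (hker : (range d₀)ᗮ ≤ ker dinv)
    (hproj : ∀ v, d₀ (dinv v) = (range d₀).starProjection v) :
    dinv * d₀ * dinv = dinv := by
  ext v
  have hfix : dinv (v - (range d₀).starProjection v) = 0 :=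
    hker (Submodule.sub_starProjection_mem_orthogonal v)
  rw [map_sub, sub_eq_zero] at hfix
  simp only [Module.End.mul_apply, hproj]
  exact hfix.symm

end PartialInverse

variable {R : Type*} [Ring R] {d₀ dinv d P Q PiE : R}

theorem dinv_mul_neumann (hsq : dinv * dinv = 0) (hP : (1 + dinv * (d - d₀)) * P = 1) :
    dinv * P = dinv := calc
  dinv * P = dinv * (1 + dinv * (d - d₀)) * P := by
    rw [mul_one_add, ← mul_assoc, hsq, zero_mul, add_zero]
  _ = dinv := by rw [mul_assoc, hP, mul_one]

theorem dinv_mul_mul_neumann (hdinv : dinv * d₀ * dinv = dinv)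
    (hP : (1 + dinv * (d - d₀)) * P = 1) : dinv * d * P = dinv * d₀ := by
  have hfix : (1 - dinv * d₀) * (1 + dinv * (d - d₀)) = 1 - dinv * d₀ := by
    rw [sub_mul, one_mul, mul_one_add, ← mul_assoc (dinv * d₀), hdinv]
    abel
  have hfixP : (1 - dinv * d₀) * P = 1 - dinv * d₀ := by
    rw [← hfix, mul_assoc, hP, mul_one, hfix]
  calc dinv * d * P = (1 + dinv * (d - d₀)) * P - (1 - dinv * d₀) * P := by noncomm_ring
  _ = dinv * d₀ := by rw [hP, hfixP]; abel

theorem neumann_mul_dinv_mul_mul_dinv (hdinv : dinv * d₀ * dinv = dinv)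
    (hP : P * (1 + dinv * (d - d₀)) = 1) : P * dinv * d * dinv = dinv := by
  have hfix : dinv * d * dinv = (1 + dinv * (d - d₀)) * dinv := by
    rw [add_mul, one_mul, mul_sub, sub_mul, hdinv]
    abel
  rw [mul_assoc P, mul_assoc P, hfix, ← mul_assoc, hP, one_mul]

theorem dinv_mul_projection (hsq : dinv * dinv = 0) (hdinv : dinv * d₀ * dinv = dinv)
    (hP : (1 + dinv * (d - d₀)) * P = 1) (hQ : Q = P * dinv) (hPiE : PiE = 1 - Q * d - d * Q) :
    dinv * PiE = 0 := by
  have hdinvQ : dinv * Q = 0 := by rw [hQ, ← mul_assoc, dinv_mul_neumann hsq hP, hsq]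
  have hdinvdQ : dinv * d * Q = dinv := by
    rw [hQ, ← mul_assoc, dinv_mul_mul_neumann hdinv hP, hdinv]
  rw [hPiE, mul_sub, mul_sub, mul_one, ← mul_assoc, hdinvQ, zero_mul, ← mul_assoc, hdinvdQ]
  abel

theorem projection_mul_dinv (hsq : dinv * dinv = 0) (hdinv : dinv * d₀ * dinv = dinv)
    (hP : P * (1 + dinv * (d - d₀)) = 1) (hQ : Q = P * dinv) (hPiE : PiE = 1 - Q * d - d * Q) :
    PiE * dinv = 0 := by
  have hQdinv : Q * dinv = 0 := by rw [hQ, mul_assoc, hsq, mul_zero]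
  have hQddinv : Q * d * dinv = dinv := by rw [hQ, neumann_mul_dinv_mul_mul_dinv hdinv hP]
  rw [hPiE, sub_mul, sub_mul, one_mul, hQddinv, mul_assoc, hQdinv, mul_zero]
  abel

theorem commute_projection (hd : d * d = 0) (hPiE : PiE = 1 - Q * d - d * Q) :
    Commute d PiE := by
  rw [hPiE]
  show d * (1 - Q * d - d * Q) = (1 - Q * d - d * Q) * d
  rw [mul_sub, mul_sub, sub_mul, sub_mul, ← mul_assoc d d, hd, mul_assoc Q d d, hd]
  simp [mul_assoc]

theorem isIdempotentElem_projection (hsq : dinv * dinv = 0) (hdinv : dinv * d₀ * dinv = dinv)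
    (hd : d * d = 0) (hP : (1 + dinv * (d - d₀)) * P = 1) (hQ : Q = P * dinv)
    (hPiE : PiE = 1 - Q * d - d * Q) : IsIdempotentElem PiE := by
  have hQQ : Q * Q = 0 := by
    rw [hQ, mul_assoc, ← mul_assoc dinv, dinv_mul_neumann hsq hP, hsq, mul_zero]
  have hQdQ : Q * d * Q = Q := calc
    Q * d * Q = P * (dinv * d * P) * dinv := by rw [hQ]; noncomm_ring
    _ = Q := by rw [dinv_mul_mul_neumann hdinv hP, mul_assoc, hdinv, hQ]
  have hQPiE : Q * PiE = 0 := by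
    rw [hPiE, mul_sub, mul_sub, mul_one, ← mul_assoc, hQQ, zero_mul, ← mul_assoc, hQdQ]
    abel
  calc PiE * PiE = PiE - Q * (d * PiE) - d * (Q * PiE) := by
        nth_rewrite 1 [hPiE]
        noncomm_ring
  _ = PiE := by rw [(commute_projection hd hPiE).eq, ← mul_assoc, hQPiE]; simp

theorem projection_mul_rumin (hleft : dinv * PiE = 0) (hright : PiE * dinv = 0)
    (hcomm : Commute d PiE) (hidem : IsIdempotentElem PiE) :
    PiE * ((1 - dinv * d₀ - d₀ * dinv) * (d * PiE)) = d * PiE := by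
  have hdinvd : dinv * (d * PiE) = 0 := by rw [hcomm.eq, ← mul_assoc, hleft, zero_mul]
  calc PiE * ((1 - dinv * d₀ - d₀ * dinv) * (d * PiE))
      = PiE * (d * PiE) - PiE * dinv * (d₀ * (d * PiE)) - PiE * d₀ * (dinv * (d * PiE)) := by
        noncomm_ring
  _ = d * PiE := by rw [hdinvd, hright, ← mul_assoc, ← hcomm.eq, mul_assoc, hidem.eq]; simp

theorem rumin_mul_self {PiE0 : R} (hd : d * d = 0)
    (hconj : PiE * (PiE0 * (d * PiE)) = d * PiE) :
    PiE0 * (d * PiE) * (PiE0 * (d * PiE)) = 0 := by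
  rw [mul_assoc, mul_assoc, hconj, ← mul_assoc d, hd, zero_mul, mul_zero]

end Rumin

/-- The Rumin differential `d_c := Π_{E₀} ∘ d ∘ Π_E` satisfies
`d_c ∘ d_c = 0` and `Π_E ∘ d_c = d ∘ Π_E` (so `(E₀, d_c)` is conjugate to `(E, d)`). -/
theorem rumin_differential_squares_to_zero_and_conjugates
    {V : Type*} [NormedAddCommGroup V] [InnerProductSpace ℝ V] [FiniteDimensional ℝ V]
    (d₀ dinv : V →ₗ[ℝ] V) (hd₀ : d₀ ∘ₗ d₀ = 0)
    (hpinv₁ : (LinearMap.range d₀)ᗮ ≤ LinearMap.ker dinv)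
    (hpinv₂ : LinearMap.range dinv ≤ (LinearMap.ker d₀)ᗮ)
    (hpinv₃ : ∀ v : V, d₀ (dinv v) = (Submodule.orthogonalProjection (LinearMap.range d₀) v : V))
    (d : V →ₗ[ℝ] V) (hd : d ∘ₗ d = 0)
    (D : V →ₗ[ℝ] V) (hD : D = dinv ∘ₗ (d - d₀))
    (N : ℕ) (hDnil : D ^ (N + 1) = 0)
    (P : V →ₗ[ℝ] V) (hP : P = ∑ k ∈ Finset.range (N + 1), ((-1 : ℝ)) ^ k • D ^ k)
    (Q : V →ₗ[ℝ] V) (hQ : Q = P ∘ₗ dinv)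
    (PiE : V →ₗ[ℝ] V) (hPiE : PiE = LinearMap.id - Q ∘ₗ d - d ∘ₗ Q)
    (PiE0 : V →ₗ[ℝ] V) (hPiE0 : PiE0 = LinearMap.id - dinv ∘ₗ d₀ - d₀ ∘ₗ dinv)
    (dc : V →ₗ[ℝ] V) (hdc : dc = PiE0 ∘ₗ d ∘ₗ PiE) :
    dc ∘ₗ dc = 0 ∧ PiE ∘ₗ dc = d ∘ₗ PiE := by
  have hsq := Rumin.dinv_mul_self hd₀ hpinv₁ hpinv₂
  have hdinv := Rumin.dinv_mul_mul_dinv hpinv₁ hpinv₃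
  have hP_geom : P = ∑ k ∈ Finset.range (N + 1), (-D) ^ k := by
    simp only [hP, ← neg_one_smul ℝ D, smul_pow]
  subst hD hdc
  have hP₁ : P * (1 + dinv * (d - d₀)) = 1 := hP_geom ▸ geom_sum_neg_mul_one_add hDnil
  have hP₂ : (1 + dinv * (d - d₀)) * P = 1 := hP_geom ▸ one_add_mul_geom_sum_neg hDnil
  have hconj : PiE * (PiE0 * (d * PiE)) = d * PiE := by
    rw [hPiE0]
    exact Rumin.projection_mul_rumin (Rumin.dinv_mul_projection hsq hdinv hP₂ hQ hPiE)
      (Rumin.projection_mul_dinv hsq hdinv hP₁ hQ hPiE) (Rumin.commute_projection hd hPiE)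
      (Rumin.isIdempotentElem_projection hsq hdinv hd hP₂ hQ hPiE)
  exact ⟨Rumin.rumin_mul_self hd hconj, hconj⟩
end
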